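/- arXiv:1410.4645 — 2 statements merged into one kernel-verified Lean document; each statement's English description precedes it below -/
import Mathlib

section
/- Let G be a countable discrete group acting continuously on a compact metric space (X,d), let K ⊆ X be non-empty and compact, and let {F_n} be a sequence of finite subsets of G satisfying lim_{n→∞} |F_n|/log n = ∞ (no Følner condition is required). Then h^B_top(K,{F_n}) = sup{ h̲_μ^{loc}({F_n}) : μ a Borel probability measure on X with μ(K) = 1 }. -/
open Filter Set MeasureTheory Topology ENNReal Pointwise

variable {G X : Type*}

section Defs

variable [Group G] [MetricSpace X] [MulAction G X]

/-- The Bowen ball `B_F(x,ε) = {y : d(gx,gy) < ε for all g ∈ F}`. -/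
def bowenBall (F : Finset G) (x : X) (ε : ℝ) : Set X :=
  {y : X | ∀ g ∈ F, dist (g • x) (g • y) < ε}

/-- A Følner sequence: `|F_n ∆ gF_n|/|F_n| → 0` for every `g ∈ G`. -/
def IsFolnerSeq (F : ℕ → Finset G) : Prop :=
  ∀ g : G, Tendsto
    (fun n => ((symmDiff (F n : Set G) ((g * ·) '' (F n : Set G))).ncard : ℝ) / (F n).card)
    atTop (𝓝 0)

/-- A tempered sequence: `|⋃_{k<n} F_k⁻¹ F_n| ≤ C |F_n|` for all `n`. -/
def IsTemperedSeq (F : ℕ → Finset G) : Prop :=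
  ∃ C : ℝ, 0 < C ∧ ∀ n : ℕ,
    ((⋃ k ∈ Finset.range n, ((F k : Set G)⁻¹ * (F n : Set G))).ncard : ℝ) ≤ C * (F n).card

/-- The growth condition `lim_n |F_n| / log n = ∞`. -/
def GrowthCond (F : ℕ → Finset G) : Prop :=
  Tendsto (fun n : ℕ => ((F n).card : ℝ) / Real.log n) atTop atTop

/-- `M(Z,N,ε,s,{F_n})`: infimum of `∑ exp(-s |F_{n_i}|)` over countable families of Bowen
balls `B_{F_{n_i}}(x_i,ε)`, `n_i ≥ N`, covering `Z`. -/
noncomputable def ballM (F : ℕ → Finset G) (Z : Set X) (N : ℕ) (ε s : ℝ) : ℝ≥0∞ :=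
  ⨅ (I : Set (X × ℕ)) (_ : I.Countable) (_ : ∀ p ∈ I, N ≤ p.2)
    (_ : Z ⊆ ⋃ p ∈ I, bowenBall (F p.2) p.1 ε),
    ∑' p : I, ENNReal.ofReal (Real.exp (-s * ((F (p : X × ℕ).2).card : ℝ)))

/-- `M(Z,ε,s,{F_n}) = lim_{N→∞} M(Z,N,ε,s,{F_n})` (the quantity is nondecreasing in `N`). -/
noncomputable def ballMN (F : ℕ → Finset G) (Z : Set X) (ε s : ℝ) : ℝ≥0∞ :=
  ⨆ N : ℕ, ballM F Z N ε s

/-- `M(Z,s,{F_n}) = lim_{ε→0} M(Z,ε,s,{F_n})` (the quantity is nondecreasing as `ε` decreases). -/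
noncomputable def ballMtot (F : ℕ → Finset G) (Z : Set X) (s : ℝ) : ℝ≥0∞ :=
  ⨆ (ε : ℝ) (_ : 0 < ε), ballMN F Z ε s

/-- The Bowen topological entropy of `Z` along `{F_n}`: the critical value of `s` at which
`M(Z,s,{F_n})` jumps from `+∞` to `0`, i.e. `inf {s : M(Z,s,{F_n}) = 0}`. -/
noncomputable def bowenEnt (F : ℕ → Finset G) (Z : Set X) : ℝ≥0∞ :=
  ⨅ (s : ℝ) (_ : ballMtot F Z s = 0), ENNReal.ofReal s

/-- The weighted quantity `W(f,N,ε,s,{F_n})`. -/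
noncomputable def wtW (F : ℕ → Finset G) (f : X → ℝ≥0∞) (N : ℕ) (ε s : ℝ) : ℝ≥0∞ :=
  ⨅ (I : Set (X × ℕ)) (c : X × ℕ → ℝ≥0∞) (_ : I.Countable)
    (_ : ∀ p ∈ I, N ≤ p.2 ∧ 0 < c p ∧ c p < ⊤)
    (_ : ∀ x : X, f x ≤ ∑' p : I, c (p : X × ℕ) *
        (bowenBall (F (p : X × ℕ).2) (p : X × ℕ).1 ε).indicator (fun _ => (1 : ℝ≥0∞)) x),
    ∑' p : I, c (p : X × ℕ) * ENNReal.ofReal (Real.exp (-s * ((F (p : X × ℕ).2).card : ℝ)))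

/-- `W(Z,N,ε,s,{F_n}) = W(χ_Z,N,ε,s,{F_n})`. -/
noncomputable def wtWset (F : ℕ → Finset G) (Z : Set X) (N : ℕ) (ε s : ℝ) : ℝ≥0∞ :=
  wtW F (Z.indicator fun _ => (1 : ℝ≥0∞)) N ε s

/-- `W(Z,ε,s,{F_n}) = lim_{N→∞} W(Z,N,ε,s,{F_n})`. -/
noncomputable def wtWN (F : ℕ → Finset G) (Z : Set X) (ε s : ℝ) : ℝ≥0∞ :=
  ⨆ N : ℕ, wtWset F Z N ε s

/-- `W(Z,s,{F_n}) = lim_{ε→0} W(Z,ε,s,{F_n})`. -/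
noncomputable def wtWtot (F : ℕ → Finset G) (Z : Set X) (s : ℝ) : ℝ≥0∞ :=
  ⨆ (ε : ℝ) (_ : 0 < ε), wtWN F Z ε s

/-- The weighted Bowen topological entropy of `Z` along `{F_n}`. -/
noncomputable def wtBowenEnt (F : ℕ → Finset G) (Z : Set X) : ℝ≥0∞ :=
  ⨅ (s : ℝ) (_ : wtWtot F Z s = 0), ENNReal.ofReal s

/-- A finite open cover of `X`. -/
def IsFinOpenCover (𝒰 : Finset (Set X)) : Prop :=
  (∀ U ∈ 𝒰, IsOpen U) ∧ ⋃₀ (𝒰 : Set (Set X)) = Set.univ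

/-- `N(⋁_{g∈F} g⁻¹𝒰)`: the minimal cardinality of a subcover of the refined cover, whose members
are the sets `X(𝐔) = ⋂_{g∈F} g⁻¹ U_g` with `U_g ∈ 𝒰`. -/
noncomputable def coverNum (𝒰 : Finset (Set X)) (F : Finset G) : ℕ :=
  sInf {k : ℕ | ∃ Λ : Finset (G → Set X), Λ.card = k ∧
    (∀ u ∈ Λ, ∀ g ∈ F, u g ∈ 𝒰) ∧
    (⋃ u ∈ Λ, ⋂ g ∈ F, (fun y => g • y) ⁻¹' u g) = Set.univ}

/-- `h_top(G,𝒰) = lim_n (1/|F_n|) log N(⋁_{g∈F_n} g⁻¹𝒰)` (the limit exists by Ornstein–Weiss,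
hence equals the `limsup`). -/
noncomputable def coverTopEnt (F : ℕ → Finset G) (𝒰 : Finset (Set X)) : ℝ :=
  limsup (fun n => Real.log (coverNum 𝒰 (F n)) / (F n).card) atTop

/-- The topological entropy `h_top(X,G)`, the supremum over finite open covers. -/
noncomputable def topEnt (X : Type*) [MetricSpace X] [MulAction G X] (F : ℕ → Finset G) : ℝ≥0∞ :=
  ⨆ (𝒰 : Finset (Set X)) (_ : IsFinOpenCover 𝒰), ENNReal.ofReal (coverTopEnt F 𝒰)

/-- `M(Z,𝒰,N,s,{F_n})`: infimum of `∑_{𝐔∈Λ} exp(-s m(𝐔))` over collections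
`Λ ⊆ ⋃_{j≥N} 𝒲_{F_j}(𝒰)` covering `Z`; an element `𝐔 ∈ 𝒲_{F_j}(𝒰)` is encoded as a pair
`(j, u)` with `u g ∈ 𝒰` for `g ∈ F_j` (and `u g = ∅` elsewhere), `X(𝐔) = ⋂_{g∈F_j} g⁻¹ (u g)`
and `m(𝐔) = |F_j|`. -/
noncomputable def covM (F : ℕ → Finset G) (𝒰 : Finset (Set X)) (Z : Set X) (N : ℕ) (s : ℝ) :
    ℝ≥0∞ :=
  ⨅ (Λ : Set (ℕ × (G → Set X)))
    (_ : ∀ p ∈ Λ, N ≤ p.1 ∧ (∀ g ∈ F p.1, p.2 g ∈ 𝒰) ∧ (∀ g ∉ F p.1, p.2 g = ∅))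
    (_ : Z ⊆ ⋃ p ∈ Λ, ⋂ g ∈ F p.1, (fun y => g • y) ⁻¹' p.2 g),
    ∑' p : Λ, ENNReal.ofReal (Real.exp (-s * ((F (p : ℕ × (G → Set X)).1).card : ℝ)))

/-- `M(Z,𝒰,s,{F_n}) = lim_{N→∞} M(Z,𝒰,N,s,{F_n})`. -/
noncomputable def covMtot (F : ℕ → Finset G) (𝒰 : Finset (Set X)) (Z : Set X) (s : ℝ) : ℝ≥0∞ :=
  ⨆ N : ℕ, covM F 𝒰 Z N s

/-- The cover-based Bowen topological entropy `h^B_top(𝒰,Z,{F_n}) = inf {s : M(Z,𝒰,s,{F_n}) = 0}`. -/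
noncomputable def covBowenEnt (F : ℕ → Finset G) (𝒰 : Finset (Set X)) (Z : Set X) : ℝ≥0∞ :=
  ⨅ (s : ℝ) (_ : covMtot F 𝒰 Z s = 0), ENNReal.ofReal s

/-- `diam(𝒰) = max {diam U : U ∈ 𝒰}`. -/
noncomputable def coverDiam (𝒰 : Finset (Set X)) : ℝ≥0∞ :=
  ⨆ U ∈ 𝒰, EMetric.diam U

end Defs

section MeasureDefs

variable [Group G] [MetricSpace X] [MulAction G X] [MeasurableSpace X]

/-- The quantity `-(1/m) log μ(B)`, with value `+∞` when `μ B = 0`. -/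
noncomputable def locTerm (μ : Measure X) (B : Set X) (m : ℕ) : ℝ≥0∞ :=
  if μ B = 0 then ⊤ else ENNReal.ofReal (-(Real.log ((μ B).toReal)) / (m : ℝ))

/-- The lower local entropy `h̲_μ^{loc}(x,ε,{F_n}) = liminf_n -(1/|F_n|) log μ(B_{F_n}(x,ε))`. -/
noncomputable def lowLoc (μ : Measure X) (F : ℕ → Finset G) (x : X) (ε : ℝ) : ℝ≥0∞ :=
  liminf (fun n => locTerm μ (bowenBall (F n) x ε) (F n).card) atTop

/-- The upper local entropy `limsup_n -(1/|F_n|) log μ(B_{F_n}(x,ε))`. -/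
noncomputable def upLoc (μ : Measure X) (F : ℕ → Finset G) (x : X) (ε : ℝ) : ℝ≥0∞ :=
  limsup (fun n => locTerm μ (bowenBall (F n) x ε) (F n).card) atTop

/-- `h̲_μ^{loc}(x,{F_n}) = lim_{ε→0} h̲_μ^{loc}(x,ε,{F_n})` (a monotone limit, i.e. the
supremum over `ε > 0`). -/
noncomputable def lowLocPt (μ : Measure X) (F : ℕ → Finset G) (x : X) : ℝ≥0∞ :=
  ⨆ (ε : ℝ) (_ : 0 < ε), lowLoc μ F x ε

/-- `h̲_μ^{loc}({F_n}) = ∫_X h̲_μ^{loc}(x,{F_n}) dμ(x)`. -/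
noncomputable def lowLocEnt (μ : Measure X) (F : ℕ → Finset G) : ℝ≥0∞ :=
  ∫⁻ x, lowLocPt μ F x ∂μ

/-- A finite measurable partition of `X`, presented as `P : Fin k → Set X`. -/
def IsMeasPartition {k : ℕ} (P : Fin k → Set X) : Prop :=
  (∀ i, MeasurableSet (P i)) ∧ Pairwise (Function.onFun Disjoint P) ∧ (⋃ i, P i) = Set.univ

/-- The static entropy `H_μ(𝒫_F)` of the join `𝒫_F = ⋁_{g∈F} g⁻¹𝒫`; its atoms are the
nonempty sets `⋂_{g∈F} g⁻¹ P(u g)` (distinct choices `u` yield disjoint atoms, and empty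
atoms contribute `0`). -/
noncomputable def partH (μ : Measure X) {k : ℕ} (P : Fin k → Set X) (F : Finset G) : ℝ :=
  letI := Classical.decEq G
  ∑ u : (↥F → Fin k),
    Real.negMulLog ((μ (⋂ g : ↥F, (fun y => (g : G) • y) ⁻¹' P (u g))).toReal)

/-- `h_μ(G,𝒫) = liminf_n (1/|F_n|) H_μ(𝒫_{F_n})`. -/
noncomputable def partEnt (μ : Measure X) (F : ℕ → Finset G) {k : ℕ} (P : Fin k → Set X) : ℝ :=
  liminf (fun n => partH μ P (F n) / (F n).card) atTop

/-- The measure-theoretic entropy `h_μ(X,G) = sup_𝒫 h_μ(G,𝒫)` (it is independent of the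
Følner sequence used to compute it). -/
noncomputable def measEnt (μ : Measure X) (F : ℕ → Finset G) : ℝ≥0∞ :=
  ⨆ (k : ℕ) (P : Fin k → Set X) (_ : IsMeasPartition P), ENNReal.ofReal (partEnt μ F P)

/-- Ergodicity of the `G`-action w.r.t. `μ`. -/
def IsErgodicGAction (G : Type*) [Group G] [MulAction G X] (μ : Measure X) : Prop :=
  ∀ A : Set X, MeasurableSet A → (∀ g : G, (g • ·) ⁻¹' A = A) → μ A = 0 ∨ μ A = 1

end MeasureDefs

/-!
The inequality `sup ≤ h^B_top` is the mass distribution principle: if `μ(K) = 1` and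
`M(K, s) = 0`, the set of points of `K` whose `2ε`-Bowen balls eventually have measure at most
`e^{-s|F_n|}` has measure bounded by every `ε`-cover, hence zero, so `h̲_μ^{loc} ≤ s` almost
everywhere.

Conversely one passes through the weighted quantity `W`. A greedy Vitali argument, run level
by level, gives `M(K, 2ε, s + δ) ≤ C · W(K, ε, s)`, where `C` only has to exceed
`∑ₙ e^{-δ|F_n|}`, which is finite because `|F_n| / log n → ∞`. Hence `s + δ < h^B_top(K)` forces
`W(K, ε, s) > 0`, and Frostman's lemma (Hahn–Banach for the sublinear functional
`f ↦ W(f χ_K)`, then the Riesz–Markov–Kakutani theorem) yields a probability measure on `K`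
with `μ(B_{F_n}(x, ε)) ≤ e^{-s|F_n|} / W(K, ε, s)`, whose lower local entropy is at least `s`.
-/

section Sums

lemma tsum_subtype_indicator_mul {α : Type*} {I J : Set α} (hJI : J ⊆ I) (c φ : α → ℝ≥0∞) :
    ∑' p : I, J.indicator c p * φ p = ∑' p : J, c p * φ p := by
  rw [tsum_subtype I fun p => J.indicator c p * φ p, tsum_subtype J fun p => c p * φ p]
  congr 1 with p
  by_cases hJ : p ∈ J
  · simp [hJ, hJI hJ]
  · by_cases hI : p ∈ I <;> simp [hJ, hI]

lemma tsum_subtype_eq_tsum_tsum_indicator {α β : Type*} (I : Set (α × β)) (d : α × β → ℝ≥0∞) :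
    ∑' p : I, d p = ∑' b, ∑' a, I.indicator d (a, b) := by
  rw [tsum_subtype, ENNReal.tsum_prod', ENNReal.tsum_comm]

lemma countable_setOf_mem_finset {α : Type*} (Y : ℕ → Finset α) :
    {p : α × ℕ | p.1 ∈ Y p.2}.Countable :=
  (countable_iUnion fun n => ((Y n).finite_toSet.prod (finite_singleton n)).countable).mono
    fun p hp => mem_iUnion.2 ⟨p.2, mem_prod.2 ⟨hp, rfl⟩⟩

lemma tsum_setOf_mem_finset {α : Type*} (Y : ℕ → Finset α) (φ : ℕ → ℝ≥0∞) :
    ∑' p : {p : α × ℕ | p.1 ∈ Y p.2}, φ (p : α × ℕ).2 = ∑' n, (Y n).card * φ n := by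
  classical
  rw [tsum_subtype_eq_tsum_tsum_indicator _ fun p => φ p.2]
  congr with n
  set J := {p : α × ℕ | p.1 ∈ Y p.2}
  rw [tsum_eq_sum (s := Y n) fun x hx => indicator_of_notMem (show (x, n) ∉ J from hx) _,
    Finset.sum_congr rfl fun x hx => indicator_of_mem (show (x, n) ∈ J from hx) _,
    Finset.sum_const (b := φ n), nsmul_eq_mul]

end Sums

section BowenBall

variable [Group G] [MetricSpace X] [MulAction G X]

lemma mem_bowenBall_self {Fn : Finset G} {x : X} {ε : ℝ} (hε : 0 < ε) :
    x ∈ bowenBall Fn x ε := fun g _ => by simpa using hε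

lemma bowenBall_mono {Fn : Finset G} {x : X} {ε₁ ε₂ : ℝ} (h : ε₁ ≤ ε₂) :
    bowenBall Fn x ε₁ ⊆ bowenBall Fn x ε₂ := fun _ hy g hg => (hy g hg).trans_le h

lemma mem_bowenBall_add {Fn : Finset G} {x y z : X} {ε₁ ε₂ : ℝ}
    (hy : y ∈ bowenBall Fn x ε₁) (hz : z ∈ bowenBall Fn x ε₂) :
    z ∈ bowenBall Fn y (ε₁ + ε₂) := fun g hg =>
  (dist_triangle_left _ _ (g • x)).trans_lt (add_lt_add (hy g hg) (hz g hg))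

lemma isOpen_bowenBall [ContinuousConstSMul G X] (Fn : Finset G) (x : X) (ε : ℝ) :
    IsOpen (bowenBall Fn x ε) := by
  have : bowenBall Fn x ε = ⋂ g ∈ Fn, (g • ·) ⁻¹' Metric.ball (g • x) ε := by
    ext y
    simp [bowenBall, dist_comm]
  rw [this]
  exact isOpen_biInter_finset fun g _ => Metric.isOpen_ball.preimage (continuous_const_smul g)

lemma ballM_le_tsum {F : ℕ → Finset G} {Z : Set X} {N : ℕ} {ε : ℝ} (s : ℝ)
    (I : Set (X × ℕ)) (hI : I.Countable) (hN : ∀ p ∈ I, N ≤ p.2)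
    (hZ : Z ⊆ ⋃ p ∈ I, bowenBall (F p.2) p.1 ε) :
    ballM F Z N ε s ≤ ∑' p : I, ENNReal.ofReal (Real.exp (-s * (F (p : X × ℕ).2).card)) :=
  (iInf_le _ I).trans <| (iInf_le _ hI).trans <| (iInf_le _ hN).trans <| iInf_le _ hZ

lemma ballMtot_eq_zero_iff {F : ℕ → Finset G} {Z : Set X} {s : ℝ} :
    ballMtot F Z s = 0 ↔ ∀ ε > 0, ∀ N, ballM F Z N ε s = 0 := by
  simp [ballMtot, ballMN, ENNReal.iSup_eq_zero]

end BowenBall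

section Growth

variable {F : ℕ → Finset G}

lemma GrowthCond.tendsto_card (hF : GrowthCond F) :
    Tendsto (fun n => ((F n).card : ℝ)) atTop atTop := by
  refine tendsto_atTop_mono' atTop ?_ hF
  filter_upwards [eventually_ge_atTop 3] with n hn
  have : Real.exp 1 ≤ n := by
    have := Real.exp_one_lt_d9
    have : (3 : ℝ) ≤ n := by exact_mod_cast hn
    linarith
  exact div_le_self (Nat.cast_nonneg _) ((Real.le_log_iff_exp_le (by positivity)).2 this)

/-- Eventually `|F_n| ≥ (2/δ) log n`, so the terms are dominated by `1/n²`. -/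
lemma GrowthCond.summable_exp_neg_mul_card (hF : GrowthCond F) {δ : ℝ} (hδ : 0 < δ) :
    Summable fun n => Real.exp (-δ * (F n).card) := by
  refine summable_of_isBigO_nat' (g := fun n : ℕ => 1 / (n : ℝ) ^ 2)
    (Real.summable_one_div_nat_pow.2 one_lt_two) ?_
  refine Asymptotics.IsBigO.of_bound 1 ?_
  filter_upwards [(tendsto_atTop.1 hF) (2 / δ), eventually_ge_atTop 2] with n hn hn2
  have hlog : 0 < Real.log n := Real.log_pos (by exact_mod_cast hn2)
  have hcard : 2 * Real.log n ≤ δ * (F n).card := by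
    rw [div_le_div_iff₀ hδ hlog] at hn
    linarith
  have hn0 : (0 : ℝ) < n := by positivity
  rw [Real.norm_of_nonneg (Real.exp_nonneg _), Real.norm_of_nonneg (by positivity), one_mul,
    one_div, ← Real.exp_log hn0, ← Real.exp_nat_mul, ← Real.exp_neg]
  exact Real.exp_le_exp.2 (by push_cast; linarith)

end Growth

section LocTerm

variable [MeasurableSpace X]

lemma locTerm_anti (μ : Measure X) {B B' : Set X} (hB : B ⊆ B') (hB' : μ B' ≠ ⊤) (m : ℕ) :
    locTerm μ B' m ≤ locTerm μ B m := by
  unfold locTerm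
  by_cases h : μ B = 0
  · simp [h]
  have h' : μ B' ≠ 0 := fun h0 => h (measure_mono_null hB h0)
  rw [if_neg h, if_neg h']
  refine ENNReal.ofReal_le_ofReal (div_le_div_of_nonneg_right (neg_le_neg ?_) m.cast_nonneg)
  exact Real.log_le_log (ENNReal.toReal_pos h (ne_top_of_le_ne_top hB' (measure_mono hB)))
    (ENNReal.toReal_mono hB' (measure_mono hB))

lemma measure_le_of_lt_locTerm {μ : Measure X} {B : Set X} (hB : μ B ≤ 1) {m : ℕ} {s : ℝ}
    (h : ENNReal.ofReal s < locTerm μ B m) :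
    μ B ≤ ENNReal.ofReal (Real.exp (-s * m)) := by
  by_cases h0 : μ B = 0
  · simp [h0]
  have hfin : μ B ≠ ⊤ := ne_top_of_le_ne_top one_ne_top hB
  rw [locTerm, if_neg h0] at h
  rcases le_or_gt (s * m) 0 with hsm | hsm
  · exact hB.trans (ENNReal.one_le_ofReal.2 (Real.one_le_exp (by linarith)))
  have hm : (0 : ℝ) < m := m.cast_nonneg.lt_of_ne fun h0 => by simp [← h0] at hsm
  have hs : s < -Real.log (μ B).toReal / m := by
    by_contra! hle
    exact (ENNReal.ofReal_le_ofReal hle).not_gt h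
  rw [lt_div_iff₀ hm] at hs
  rw [← ENNReal.ofReal_toReal hfin]
  refine ENNReal.ofReal_le_ofReal ?_
  rw [← Real.log_le_iff_le_exp (ENNReal.toReal_pos h0 hfin)]
  linarith

lemma ofReal_add_log_div_le_locTerm {μ : Measure X} {B : Set X} {m : ℕ} {s C : ℝ} (hm : 0 < m)
    (hC : 0 < C) (h : μ B ≤ ENNReal.ofReal (Real.exp (-s * m) / C)) :
    ENNReal.ofReal (s + Real.log C / m) ≤ locTerm μ B m := by
  rw [locTerm]
  split_ifs with h0
  · exact le_top
  have hpos := ENNReal.toReal_pos h0 (ne_top_of_le_ne_top ENNReal.ofReal_ne_top h)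
  have hlog : Real.log (μ B).toReal ≤ -s * m - Real.log C := by
    calc _ ≤ Real.log (Real.exp (-s * m) / C) :=
          Real.log_le_log hpos (ENNReal.toReal_le_of_le_ofReal (by positivity) h)
      _ = _ := by rw [Real.log_div (Real.exp_ne_zero _) hC.ne', Real.log_exp]
  have hm' : (0 : ℝ) < m := by exact_mod_cast hm
  refine ENNReal.ofReal_le_ofReal ?_
  rw [le_div_iff₀ hm', add_mul, div_mul_cancel₀ _ hm'.ne']
  linarith

end LocTerm

section LocalEntropy

variable [Group G] [MetricSpace X] [MulAction G X] [MeasurableSpace X]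

/-- The mass distribution principle. -/
lemma measure_le_ballM (μ : Measure X) {F : ℕ → Finset G} {Z A : Set X} {N : ℕ} {ε s : ℝ}
    (hAZ : A ⊆ Z) (hA : ∀ x ∈ A, ∀ n ≥ N,
      μ (bowenBall (F n) x (2 * ε)) ≤ ENNReal.ofReal (Real.exp (-s * (F n).card))) :
    μ A ≤ ballM F Z N ε s := by
  refine le_iInf fun I => le_iInf fun hI => le_iInf fun hN => le_iInf fun hZ => ?_
  calc μ A ≤ ∑' p : I, μ (bowenBall (F (p : X × ℕ).2) (p : X × ℕ).1 ε ∩ A) := by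
        refine (measure_mono fun x hx => ?_).trans
          (measure_biUnion_le μ hI fun p => bowenBall (F p.2) p.1 ε ∩ A)
        obtain ⟨p, hp, hxp⟩ := mem_iUnion₂.1 (hZ (hAZ hx))
        exact mem_iUnion₂.2 ⟨p, hp, hxp, hx⟩
    _ ≤ _ := by
        refine ENNReal.tsum_le_tsum fun p => ?_
        obtain h | ⟨y, hyB, hyA⟩ :=
          (bowenBall (F (p : X × ℕ).2) (p : X × ℕ).1 ε ∩ A).eq_empty_or_nonempty
        · simp [h]
        refine (measure_mono fun z hz => ?_).trans (hA y hyA _ (hN _ p.2))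
        simpa [two_mul] using mem_bowenBall_add hyB hz.1

lemma lowLoc_anti (μ : Measure X) [IsFiniteMeasure μ] (F : ℕ → Finset G) (x : X) :
    Antitone (lowLoc μ F x) := fun _ _ h =>
  liminf_le_liminf (.of_forall fun _ => locTerm_anti μ (bowenBall_mono h) (measure_ne_top μ _) _)

/-- Along `ε_j = 1/(j+1)`, the points of `K` with local entropy above `s` lie in countably
many sets to which `measure_le_ballM` applies. -/
lemma lowLocEnt_le_of_ballM_eq_zero (μ : Measure X) [IsProbabilityMeasure μ]
    {F : ℕ → Finset G} {K : Set X} {s : ℝ} (hK : MeasurableSet K) (hμK : μ K = 1)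
    (hM : ∀ ε > 0, ∀ N, ballM F K N ε s = 0) :
    lowLocEnt μ F ≤ ENNReal.ofReal s := by
  set A : ℕ → ℕ → Set X := fun j N => {x | x ∈ K ∧ ∀ n ≥ N,
    μ (bowenBall (F n) x (1 / (j + 1))) ≤ ENNReal.ofReal (Real.exp (-s * (F n).card))}
  have hA : ∀ j N, μ (A j N) = 0 := fun j N => by
    refine le_antisymm ?_ zero_le
    rw [← hM (1 / (2 * (j + 1))) (by positivity) N]
    refine measure_le_ballM μ (fun x hx => hx.1) fun x hx n hn => ?_
    convert hx.2 n hn using 3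
    field_simp
  have hbad : {x | ¬ lowLocPt μ F x ≤ ENNReal.ofReal s} ⊆ Kᶜ ∪ ⋃ j, ⋃ N, A j N := by
    intro x hx
    by_cases hxK : x ∈ K
    · simp only [mem_ofPred_eq, not_le, lowLocPt, lt_iSup_iff] at hx
      obtain ⟨ε, hε, hlt⟩ := hx
      obtain ⟨j, hj⟩ := exists_nat_one_div_lt hε
      obtain ⟨N, hN⟩ := eventually_atTop.1
        (eventually_lt_of_lt_liminf (hlt.trans_le (lowLoc_anti μ F x hj.le)))
      exact Or.inr (mem_iUnion₂.2
        ⟨j, N, hxK, fun n hn => measure_le_of_lt_locTerm prob_le_one (hN n hn)⟩)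
    · exact Or.inl hxK
  have hae : ∀ᵐ x ∂μ, lowLocPt μ F x ≤ ENNReal.ofReal s := by
    refine measure_mono_null hbad (measure_union_null ?_ ?_)
    · exact (prob_compl_eq_zero_iff hK).2 hμK
    · exact measure_iUnion_null fun j => measure_iUnion_null (hA j)
  calc lowLocEnt μ F ≤ ∫⁻ _, ENNReal.ofReal s ∂μ := lintegral_mono_ae hae
    _ = ENNReal.ofReal s := by simp

lemma ofReal_le_lowLocEnt (μ : Measure X) [IsProbabilityMeasure μ] {F : ℕ → Finset G}
    (hF : Tendsto (fun n => ((F n).card : ℝ)) atTop atTop) {N : ℕ} {ε s C : ℝ} (hε : 0 < ε)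
    (hC : 0 < C) (hμ : ∀ x n, N ≤ n →
      μ (bowenBall (F n) x ε) ≤ ENNReal.ofReal (Real.exp (-s * (F n).card) / C)) :
    ENNReal.ofReal s ≤ lowLocEnt μ F := by
  have hlow : ∀ x, ENNReal.ofReal s ≤ lowLoc μ F x ε := fun x => by
    have hlim : Tendsto (fun n => ENNReal.ofReal (s + Real.log C / (F n).card)) atTop
        (𝓝 (ENNReal.ofReal s)) := by
      have := (tendsto_const_nhds (x := s)).add
        ((tendsto_const_nhds (x := Real.log C)).div_atTop hF)
      rw [add_zero] at this
      exact (ENNReal.continuous_ofReal.tendsto s).comp this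
    rw [← hlim.liminf_eq]
    refine liminf_le_liminf ?_
    filter_upwards [hF.eventually_gt_atTop 0, eventually_ge_atTop N] with n hn hnN
    exact ofReal_add_log_div_le_locTerm (by exact_mod_cast hn) hC (hμ x n hnN)
  calc ENNReal.ofReal s = ∫⁻ _, ENNReal.ofReal s ∂μ := by simp
    _ ≤ lowLocEnt μ F := lintegral_mono fun x => (hlow x).trans (le_iSup₂_of_le ε hε le_rfl)

end LocalEntropy

section Weighted

variable [Group G] [MetricSpace X] [MulAction G X] {F : ℕ → Finset G} {N : ℕ} {ε s : ℝ}

lemma wtW_le_tsum {f : X → ℝ≥0∞} (I : Set (X × ℕ)) (c : X × ℕ → ℝ≥0∞) (hI : I.Countable)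
    (hc : ∀ p ∈ I, N ≤ p.2 ∧ 0 < c p ∧ c p < ⊤)
    (hf : ∀ x : X, f x ≤ ∑' p : I, c (p : X × ℕ) *
        (bowenBall (F (p : X × ℕ).2) (p : X × ℕ).1 ε).indicator (fun _ => (1 : ℝ≥0∞)) x) :
    wtW F f N ε s ≤ ∑' p : I, c (p : X × ℕ) *
      ENNReal.ofReal (Real.exp (-s * ((F (p : X × ℕ).2).card : ℝ))) :=
  (iInf_le _ I).trans <| (iInf_le _ c).trans <| (iInf_le _ hI).trans <|
    (iInf_le _ hc).trans <| iInf_le _ hf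

lemma exists_lt_of_wtW_lt {f : X → ℝ≥0∞} {b : ℝ≥0∞} (h : wtW F f N ε s < b) :
    ∃ (I : Set (X × ℕ)) (c : X × ℕ → ℝ≥0∞), I.Countable ∧
      (∀ p ∈ I, N ≤ p.2 ∧ 0 < c p ∧ c p < ⊤) ∧
      (∀ x : X, f x ≤ ∑' p : I, c (p : X × ℕ) *
        (bowenBall (F (p : X × ℕ).2) (p : X × ℕ).1 ε).indicator (fun _ => (1 : ℝ≥0∞)) x) ∧
      ∑' p : I, c (p : X × ℕ) *
        ENNReal.ofReal (Real.exp (-s * ((F (p : X × ℕ).2).card : ℝ))) < b := by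
  simpa only [wtW, iInf_lt_iff, exists_prop] using h

lemma wtW_zero : wtW F (0 : X → ℝ≥0∞) N ε s = 0 := by
  have := wtW_le_tsum (F := F) (N := N) (ε := ε) (s := s) (f := (0 : X → ℝ≥0∞)) ∅ (fun _ => 1)
    countable_empty (by simp) (by simp)
  simpa using this

lemma wtW_le_exp {f : X → ℝ≥0∞} {n : ℕ} {x : X} (hn : N ≤ n)
    (hf : f ≤ (bowenBall (F n) x ε).indicator fun _ => 1) :
    wtW F f N ε s ≤ ENNReal.ofReal (Real.exp (-s * (F n).card)) := by
  simpa using wtW_le_tsum (F := F) (f := f) (N := N) (ε := ε) (s := s) {(x, n)} (fun _ => 1)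
    (countable_singleton _) (by simp [hn]) fun y => by simpa using hf y

lemma wtW_le_add_of_le {f g₁ g₂ : X → ℝ≥0∞} (hf : f ≤ g₁ + g₂)
    {I₁ I₂ : Set (X × ℕ)} {c₁ c₂ : X × ℕ → ℝ≥0∞} (hI₁ : I₁.Countable) (hI₂ : I₂.Countable)
    (hc₁ : ∀ p ∈ I₁, N ≤ p.2 ∧ 0 < c₁ p ∧ c₁ p < ⊤) (hc₂ : ∀ p ∈ I₂, N ≤ p.2 ∧ 0 < c₂ p ∧ c₂ p < ⊤)
    (hg₁ : ∀ x : X, g₁ x ≤ ∑' p : I₁, c₁ (p : X × ℕ) *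
        (bowenBall (F (p : X × ℕ).2) (p : X × ℕ).1 ε).indicator (fun _ => (1 : ℝ≥0∞)) x)
    (hg₂ : ∀ x : X, g₂ x ≤ ∑' p : I₂, c₂ (p : X × ℕ) *
        (bowenBall (F (p : X × ℕ).2) (p : X × ℕ).1 ε).indicator (fun _ => (1 : ℝ≥0∞)) x) :
    wtW F f N ε s ≤
      ∑' p : I₁, c₁ (p : X × ℕ) * ENNReal.ofReal (Real.exp (-s * (F (p : X × ℕ).2).card)) +
      ∑' p : I₂, c₂ (p : X × ℕ) * ENNReal.ofReal (Real.exp (-s * (F (p : X × ℕ).2).card)) := by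
  set c := I₁.indicator c₁ + I₂.indicator c₂
  have hsum : ∀ φ : X × ℕ → ℝ≥0∞, ∑' p : ↥(I₁ ∪ I₂), c p * φ p =
      ∑' p : I₁, c₁ p * φ p + ∑' p : I₂, c₂ p * φ p := fun φ => by
    simp_rw [c, Pi.add_apply, add_mul, ENNReal.tsum_add,
      tsum_subtype_indicator_mul subset_union_left, tsum_subtype_indicator_mul subset_union_right]
  rw [← hsum fun p => ENNReal.ofReal (Real.exp (-s * ((F p.2).card : ℝ)))]
  refine wtW_le_tsum _ c (hI₁.union hI₂) (fun p hp => ?_) fun x => ?_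
  · have h₁ : I₁.indicator c₁ p < ⊤ := by
      by_cases h : p ∈ I₁ <;> simp [h, (hc₁ p _).2.2]
    have h₂ : I₂.indicator c₂ p < ⊤ := by
      by_cases h : p ∈ I₂ <;> simp [h, (hc₂ p _).2.2]
    rcases hp with hp | hp
    · exact ⟨(hc₁ p hp).1, (hc₁ p hp).2.1.trans_le (by simp [c, hp]),
        ENNReal.add_lt_top.2 ⟨h₁, h₂⟩⟩
    · exact ⟨(hc₂ p hp).1, (hc₂ p hp).2.1.trans_le (by simp [c, hp]),
        ENNReal.add_lt_top.2 ⟨h₁, h₂⟩⟩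
  · rw [hsum fun p => (bowenBall (F p.2) p.1 ε).indicator (fun _ => 1) x]
    exact (hf x).trans (add_le_add (hg₁ x) (hg₂ x))

lemma wtW_add_le {f g₁ g₂ : X → ℝ≥0∞} (hf : f ≤ g₁ + g₂) :
    wtW F f N ε s ≤ wtW F g₁ N ε s + wtW F g₂ N ε s := by
  refine ENNReal.le_of_forall_pos_le_add fun η hη hfin => ?_
  have hη2 : (η / 2 : ℝ≥0∞) ≠ 0 := by simpa using hη.ne'
  obtain ⟨I₁, c₁, hI₁, hc₁, hg₁, hcost₁⟩ :=
    exists_lt_of_wtW_lt (ENNReal.lt_add_right (ENNReal.add_ne_top.1 hfin.ne).1 hη2)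
  obtain ⟨I₂, c₂, hI₂, hc₂, hg₂, hcost₂⟩ :=
    exists_lt_of_wtW_lt (ENNReal.lt_add_right (ENNReal.add_ne_top.1 hfin.ne).2 hη2)
  calc wtW F f N ε s ≤ _ := wtW_le_add_of_le hf hI₁ hI₂ hc₁ hc₂ hg₁ hg₂
    _ ≤ (wtW F g₁ N ε s + η / 2) + (wtW F g₂ N ε s + η / 2) :=
        add_le_add hcost₁.le hcost₂.le
    _ = wtW F g₁ N ε s + wtW F g₂ N ε s + η := by
        rw [add_add_add_comm, ENNReal.add_halves]

lemma wtW_smul_le {f : X → ℝ≥0∞} {a : ℝ≥0∞} (ha₀ : a ≠ 0) (ha : a ≠ ⊤) :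
    wtW F (a • f) N ε s ≤ a * wtW F f N ε s := by
  conv_rhs => rw [wtW]; simp only [ENNReal.mul_iInf_of_ne ha₀ ha]
  refine le_iInf fun I => le_iInf fun c => le_iInf fun hI => le_iInf fun hc => le_iInf fun hf => ?_
  calc wtW F (a • f) N ε s ≤ ∑' p : I, (a * c p) *
      ENNReal.ofReal (Real.exp (-s * ((F (p : X × ℕ).2).card : ℝ))) := by
        refine wtW_le_tsum I (fun p => a * c p) hI (fun p hp => ⟨(hc p hp).1,
          ENNReal.mul_pos ha₀ (hc p hp).2.1.ne', ENNReal.mul_lt_top ha.lt_top (hc p hp).2.2⟩)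
          fun x => ?_
        simp_rw [Pi.smul_apply, smul_eq_mul, mul_assoc, ENNReal.tsum_mul_left]
        exact mul_le_mul_right (hf x) a
    _ = _ := by simp_rw [mul_assoc, ENNReal.tsum_mul_left]

lemma wtW_smul {f : X → ℝ≥0∞} {a : ℝ≥0∞} (ha₀ : a ≠ 0) (ha : a ≠ ⊤) :
    wtW F (a • f) N ε s = a * wtW F f N ε s := by
  refine le_antisymm (wtW_smul_le ha₀ ha) ?_
  have := wtW_smul_le (F := F) (N := N) (ε := ε) (s := s) (f := a • f)
    (ENNReal.inv_ne_zero.2 ha) (ENNReal.inv_ne_top.2 ha₀)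
  rw [smul_smul, ENNReal.inv_mul_cancel ha₀ ha, one_smul] at this
  exact (ENNReal.mul_le_iff_le_inv ha₀ ha).2 this

lemma wtW_ne_top [CompactSpace X] [ContinuousConstSMul G X] {f : X → ℝ≥0∞} {M : ℝ≥0∞}
    (hε : 0 < ε) (hM : M ≠ ⊤) (hf : f ≤ fun _ => M) : wtW F f N ε s ≠ ⊤ := by
  obtain ⟨Q, hQ⟩ := isCompact_univ.elim_finite_subcover (fun x : X => bowenBall (F N) x ε)
    (fun x => isOpen_bowenBall _ x ε) fun x _ => mem_iUnion.2 ⟨x, mem_bowenBall_self hε⟩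
  have hI : ((Q : Set X) ×ˢ {N}).Finite := Q.finite_toSet.prod (finite_singleton N)
  refine ne_top_of_le_ne_top ?_ (wtW_le_tsum _ (fun _ => M + 1) hI.countable
    (fun p hp => ⟨hp.2.ge, by simp, by simpa using hM.lt_top⟩) fun x => ?_)
  · have := hI.fintype
    rw [tsum_fintype]
    exact ENNReal.sum_ne_top.2 fun _ _ =>
      ENNReal.mul_ne_top (by simpa using hM) ENNReal.ofReal_ne_top
  · obtain ⟨q, hq, hxq⟩ := mem_iUnion₂.1 (hQ (mem_univ x))
    refine le_trans ?_ (ENNReal.le_tsum (⟨(q, N), hq, rfl⟩ : ↥((Q : Set X) ×ˢ {N})))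
    simpa [indicator_of_mem hxq] using (hf x).trans le_self_add

end Weighted

section Greedy

variable [Group G] [MetricSpace X] [MulAction G X]

lemma tsum_indicator_mul_indicator_bowenBall {Fn : Finset G} {ε : ℝ} {u : X → ℝ≥0∞} {z w : X}
    (hw : w ∉ bowenBall Fn z (2 * ε)) :
    ∑' x, {x | z ∈ bowenBall Fn x ε}ᶜ.indicator u x * (bowenBall Fn x ε).indicator (fun _ => 1) w =
      ∑' x, u x * (bowenBall Fn x ε).indicator (fun _ => 1) w := by
  refine tsum_congr fun x => ?_
  by_cases hx : z ∈ bowenBall Fn x ε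
  · have hwx : w ∉ bowenBall Fn x ε := fun hwx =>
      hw (by simpa [two_mul] using mem_bowenBall_add hx hwx)
    simp [hx, hwx]
  · simp [hx]

/-- Greedy selection: keep a point `z` of `Z` and discard every centre whose ball contains `z`;
this removes weight at least `γ`, and only points of the doubled ball around `z` lose weight. -/
lemma exists_finset_card_mul_le_of_le_tsum (Fn : Finset G) (ε : ℝ) {γ : ℝ≥0∞} (hγ : γ ≠ 0)
    {u : X → ℝ≥0∞} (hu : ∑' x, u x ≠ ⊤) {Z : Set X}
    (hZ : ∀ z ∈ Z, γ ≤ ∑' x, u x * (bowenBall Fn x ε).indicator (fun _ => 1) z) :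
    ∃ Y : Finset X, Y.card * γ ≤ ∑' x, u x ∧ Z ⊆ ⋃ y ∈ Y, bowenBall Fn y (2 * ε) := by
  classical
  obtain ⟨m, hm⟩ := ENNReal.exists_nat_mul_gt hγ hu
  clear hu
  induction m generalizing u Z with
  | zero => simp at hm
  | succ m ih =>
    rcases Z.eq_empty_or_nonempty with rfl | ⟨z, hz⟩
    · exact ⟨∅, by simp, by simp⟩
    set S := {x | z ∈ bowenBall Fn x ε}
    have hsplit : ∑' x, u x = ∑' x, Sᶜ.indicator u x + ∑' x, S.indicator u x := by
      rw [← ENNReal.tsum_add]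
      congr with x
      by_cases hx : x ∈ S <;> simp [hx]
    have hγS : γ ≤ ∑' x, S.indicator u x := by
      refine (hZ z hz).trans_eq (tsum_congr fun x => ?_)
      by_cases hx : x ∈ S <;> simp_all [S]
    have hγ_top : γ ≠ ⊤ := ne_top_of_lt ((hγS.trans (hsplit ▸ le_add_self)).trans_lt hm)
    have hZ' : ∀ w ∈ Z \ bowenBall Fn z (2 * ε),
        γ ≤ ∑' x, Sᶜ.indicator u x * (bowenBall Fn x ε).indicator (fun _ => 1) w :=
      fun w hw => (hZ w hw.1).trans_eq (tsum_indicator_mul_indicator_bowenBall hw.2).symm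
    have hm' : ∑' x, Sᶜ.indicator u x < m * γ := by
      refine (ENNReal.add_lt_add_iff_right hγ_top).1 ?_
      calc _ ≤ ∑' x, u x := hsplit ▸ add_le_add_right hγS _
        _ < m * γ + γ := by simpa [add_mul] using hm
    obtain ⟨Y, hY, hZY⟩ := ih hZ' hm'
    refine ⟨insert z Y, ?_, fun w hw => ?_⟩
    · calc ((insert z Y).card : ℝ≥0∞) * γ ≤ (Y.card + 1) * γ := by
            gcongr
            exact_mod_cast Finset.card_insert_le z Y
        _ = Y.card * γ + γ := by ring
        _ ≤ ∑' x, u x := hsplit ▸ add_le_add hY hγS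
    · by_cases hwz : w ∈ bowenBall Fn z (2 * ε)
      · exact mem_biUnion (Finset.mem_insert_self z Y) hwz
      · obtain ⟨y, hy, hwy⟩ := mem_iUnion₂.1 (hZY ⟨hw, hwz⟩)
        exact mem_biUnion (Finset.mem_insert_of_mem hy) hwy

end Greedy

section WeightedToBall

variable [Group G] [MetricSpace X] [MulAction G X] {F : ℕ → Finset G} {N : ℕ} {ε s : ℝ}

/-- Every point of `Z` carries weight `≥ γ_n` on some level `n` because `∑ γ_n < 1`; the greedy
cover of that level uses at most `(∑ₓ u n x) / γ_n` balls, and the gain `e^{-δ|F_n|} ≤ C γ_n`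
pays for the factor `1 / γ_n`. -/
lemma ballM_le_mul_tsum_levels {Z : Set X} {δ : ℝ} {C : ℝ≥0∞} {γ : ℕ → ℝ≥0∞}
    (hγ : ∀ n, γ n ≠ 0) (hγ_sum : ∑' n, γ n < 1)
    (hCγ : ∀ n, ENNReal.ofReal (Real.exp (-δ * (F n).card)) ≤ C * γ n)
    (u : ℕ → X → ℝ≥0∞) (hu_supp : ∀ n x, u n x ≠ 0 → N ≤ n)
    (hZ : ∀ z ∈ Z, 1 ≤ ∑' n, ∑' x, u n x * (bowenBall (F n) x ε).indicator (fun _ => 1) z) :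
    ballM F Z N (2 * ε) (s + δ) ≤
      C * ∑' n, (∑' x, u n x) * ENNReal.ofReal (Real.exp (-s * (F n).card)) := by
  set e : ℝ → ℕ → ℝ≥0∞ := fun t n => ENNReal.ofReal (Real.exp (-t * (F n).card))
  have he : ∀ t n, e t n ≠ 0 := fun t n => by simp [e, Real.exp_pos]
  replace hCγ : ∀ n, e δ n ≤ C * γ n := hCγ
  have hC₀ : C ≠ 0 := by
    rintro rfl
    simpa using he δ 0 (nonpos_iff_eq_zero.1 ((hCγ 0).trans_eq (zero_mul _)))
  by_cases htop : ∑' n, (∑' x, u n x) * e s n = ⊤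
  · rw [htop, ENNReal.mul_top hC₀]
    exact le_top
  have hu : ∀ n, ∑' x, u n x ≠ ⊤ := fun n h =>
    htop (top_unique ((ENNReal.le_tsum n).trans' (by rw [h, ENNReal.top_mul (he s n)])))
  choose Y hY hZY using fun n => exists_finset_card_mul_le_of_le_tsum (F n) ε (hγ n) (hu n)
    (Z := {z | z ∈ Z ∧ γ n ≤ ∑' x, u n x * (bowenBall (F n) x ε).indicator (fun _ => 1) z})
    fun z hz => hz.2
  have hYN : ∀ n y, y ∈ Y n → N ≤ n := by
    intro n y hy
    obtain ⟨x, hx⟩ : ∃ x, u n x ≠ 0 := by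
      by_contra! h
      have := hY n
      simp only [h, tsum_zero, nonpos_iff_eq_zero, mul_eq_zero, hγ, or_false] at this
      simp [Finset.card_eq_zero.1 (by exact_mod_cast this)] at hy
    exact hu_supp n x hx
  refine (ballM_le_tsum _ _ (countable_setOf_mem_finset Y) (fun p hp => hYN p.2 p.1 hp)
    fun z hz => ?_).trans ?_
  · obtain ⟨n, hn⟩ : ∃ n, γ n ≤ ∑' x, u n x * (bowenBall (F n) x ε).indicator (fun _ => 1) z := by
      by_contra! h
      exact ((hZ z hz).trans (ENNReal.tsum_le_tsum fun n => (h n).le)).not_gt hγ_sum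
    obtain ⟨y, hy, hzy⟩ := mem_iUnion₂.1 (hZY n ⟨hz, hn⟩)
    exact mem_iUnion₂.2 ⟨(y, n), hy, hzy⟩
  rw [tsum_setOf_mem_finset Y (e (s + δ)), ← ENNReal.tsum_mul_left]
  refine ENNReal.tsum_le_tsum fun n => ?_
  have he_add : e (s + δ) n = e s n * e δ n := by
    rw [← ENNReal.ofReal_mul (Real.exp_nonneg _), ← Real.exp_add, ← add_mul, ← neg_add]
  calc (Y n).card * e (s + δ) n ≤ (Y n).card * (e s n * (C * γ n)) := by
        rw [he_add]
        grw [hCγ n]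
    _ = C * ((Y n).card * γ n * e s n) := by ring
    _ ≤ C * ((∑' x, u n x) * e s n) := by grw [hY n]

lemma ballM_le_mul_wtWset {Z : Set X} {δ : ℝ} {C : ℝ≥0∞}
    (hC : ∑' n, ENNReal.ofReal (Real.exp (-δ * (F n).card)) < C) (hC_top : C ≠ ⊤) :
    ballM F Z N (2 * ε) (s + δ) ≤ C * wtWset F Z N ε s := by
  have hC₀ : C ≠ 0 := (zero_le.trans_lt hC).ne'
  set γ : ℕ → ℝ≥0∞ := fun n => ENNReal.ofReal (Real.exp (-δ * (F n).card)) / C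
  have hγ_sum : ∑' n, γ n < 1 := by
    have : ∑' n, γ n = (∑' n, ENNReal.ofReal (Real.exp (-δ * (F n).card))) / C := by
      simp only [γ, div_eq_mul_inv, ENNReal.tsum_mul_right]
    exact this ▸ ENNReal.div_lt_of_lt_mul (by rwa [one_mul])
  simp only [wtWset, wtW, ENNReal.mul_iInf_of_ne hC₀ hC_top]
  refine le_iInf fun I => le_iInf fun c => le_iInf fun _ => le_iInf fun hc => le_iInf fun hZ => ?_
  have hsplit : ∀ φ : X × ℕ → ℝ≥0∞,
      ∑' p : I, c p * φ p = ∑' n, ∑' x, I.indicator c (x, n) * φ (x, n) := fun φ => by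
    rw [tsum_subtype_eq_tsum_tsum_indicator I fun p => c p * φ p]
    simp only [indicator_mul_left]
  rw [hsplit fun p => ENNReal.ofReal (Real.exp (-s * (F p.2).card))]
  simp_rw [ENNReal.tsum_mul_right]
  refine ballM_le_mul_tsum_levels (fun n => by simp [γ, Real.exp_pos, hC_top]) hγ_sum
    (fun n => (ENNReal.mul_div_cancel hC₀ hC_top).ge) _ (fun n x h => ?_) fun z hz => ?_
  · by_contra hn
    exact h (indicator_of_notMem (fun hI => hn (hc _ hI).1) _)
  · simpa [indicator_of_mem hz, hsplit fun p => (bowenBall (F p.2) p.1 ε).indicator (fun _ => 1) z]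
      using hZ z

end WeightedToBall

lemma exists_linearMap_le_sublinear_eq {E : Type*} [AddCommGroup E] [Module ℝ E] (p : E → ℝ)
    (hp_smul : ∀ a : ℝ, 0 < a → ∀ x, p (a • x) = a * p x)
    (hp_add : ∀ x y, p (x + y) ≤ p x + p y) (e : E) :
    ∃ L : E →ₗ[ℝ] ℝ, (∀ x, L x ≤ p x) ∧ L e = p e := by
  have hp₀ : p 0 = 0 := by
    have := hp_smul 2 two_pos 0
    rw [smul_zero] at this
    linarith
  have key : ∀ a : ℝ, a * p e ≤ p (a • e) := by
    intro a
    rcases lt_trichotomy a 0 with ha | rfl | ha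
    · have := hp_add (a • e) ((-a) • e)
      rw [← add_smul, add_neg_cancel, zero_smul, hp₀, hp_smul (-a) (neg_pos.2 ha)] at this
      linarith
    · simp [hp₀]
    · exact (hp_smul a ha e).ge
  have hspan : ∀ c : ℝ, c • e = 0 → (RingHom.id ℝ) c • p e = 0 := by
    intro c hc
    have h₁ := key c
    have h₂ := key (-c)
    rw [hc, hp₀] at h₁
    rw [neg_smul, hc, neg_zero, hp₀] at h₂
    simp only [RingHom.id_apply, smul_eq_mul]
    linarith
  set L₀ := LinearPMap.mkSpanSingleton' e (p e) hspan
  obtain ⟨L, hL, hLp⟩ := exists_extension_of_le_sublinear L₀ p hp_smul hp_add <| by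
    rintro ⟨v, hv⟩
    obtain ⟨a, rfl⟩ := Submodule.mem_span_singleton.1 (by simpa [L₀] using hv)
    rw [LinearPMap.mkSpanSingleton'_apply]
    simpa using key a
  have he : e ∈ L₀.domain := by simp [L₀, Submodule.mem_span_singleton_self]
  refine ⟨L, hLp, ?_⟩
  rw [show e = (⟨e, he⟩ : L₀.domain) from rfl, hL, LinearPMap.mkSpanSingleton'_apply_self]

section Riesz

variable [TopologicalSpace X] [T2Space X] [CompactSpace X] [MeasurableSpace X] [BorelSpace X]

lemma exists_isProbabilityMeasure_le_of_positive (ℓ : C(X, ℝ) →ₗ[ℝ] ℝ)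
    (hℓ : ∀ f, 0 ≤ f → 0 ≤ ℓ f) (hℓ₁ : ℓ 1 = 1) :
    ∃ μ : Measure X, IsProbabilityMeasure μ ∧ ∀ U, IsOpen U → ∀ b : ℝ,
      (∀ f : C(X, ℝ), 0 ≤ f → f ≤ 1 → (∀ x ∉ U, f x = 0) → ℓ f ≤ b) → μ U ≤ ENNReal.ofReal b := by
  let Λ : CompactlySupportedContinuousMap X ℝ →ₚ[ℝ] ℝ := PositiveLinearMap.mk₀
    { toFun g := ℓ g.toContinuousMap
      map_add' g g' := map_add ℓ _ _
      map_smul' a g := map_smul ℓ a _ }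
    fun g hg => hℓ _ hg
  let toCc := CompactlySupportedContinuousMap.continuousMapEquiv (α := X) (β := ℝ)
  let one := toCc 1
  refine ⟨RealRMK.rieszMeasure Λ, ⟨le_antisymm ?_ ?_⟩, fun U hU b hb => ?_⟩
  · have := RealRMK.rieszMeasure_le_of_eq_one Λ (f := one) (fun _ => zero_le_one) isCompact_univ
      fun _ _ => rfl
    rwa [show Λ one = 1 from hℓ₁, ENNReal.ofReal_one] at this
  · have := RealRMK.le_rieszMeasure_tsupport_subset Λ (f := one)
      (fun _ => ⟨zero_le_one, le_rfl⟩) (subset_univ _)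
    rwa [show Λ one = 1 from hℓ₁, ENNReal.ofReal_one] at this
  rw [hU.measure_eq_iSup_isCompact]
  refine iSup₂_le fun C hCU => iSup_le fun hC => ?_
  obtain ⟨f, hfU, hfC, hf01⟩ := exists_continuous_zero_one_of_isCompact' hC hU.isClosed_compl
    (disjoint_compl_right_iff_subset.2 hCU)
  refine (RealRMK.rieszMeasure_le_of_eq_one Λ (f := toCc f) (fun x => (hf01 x).1) hC
    fun x hx => hfC hx).trans (ENNReal.ofReal_le_ofReal ?_)
  exact hb f (fun x => (hf01 x).1) (fun x => (hf01 x).2) fun x hx => hfU hx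

end Riesz

section Frostman

variable [Group G] [MetricSpace X] [MulAction G X] {F : ℕ → Finset G} {K : Set X} {N : ℕ}
  {ε s : ℝ}

variable (F K N ε s) in
noncomputable def wtWFunctional (f : C(X, ℝ)) : ℝ :=
  (wtW F (K.indicator fun x => ENNReal.ofReal (f x)) N ε s).toReal

lemma wtW_indicator_ofReal_ne_top [CompactSpace X] [ContinuousConstSMul G X] (hε : 0 < ε)
    (f : C(X, ℝ)) : wtW F (K.indicator fun x => ENNReal.ofReal (f x)) N ε s ≠ ⊤ := by
  refine wtW_ne_top hε (M := ENNReal.ofReal ‖f‖) ENNReal.ofReal_ne_top fun x => ?_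
  by_cases hx : x ∈ K
  · simpa [hx] using ENNReal.ofReal_le_ofReal ((le_abs_self _).trans (f.norm_coe_le_norm x))
  · simp [hx]

lemma wtWset_ne_top [CompactSpace X] [ContinuousConstSMul G X] (hε : 0 < ε) :
    wtWset F K N ε s ≠ ⊤ := by
  simpa [wtWset] using wtW_indicator_ofReal_ne_top (F := F) (K := K) (N := N) (s := s) hε 1

lemma wtWFunctional_smul {a : ℝ} (ha : 0 < a) (f : C(X, ℝ)) :
    wtWFunctional F K N ε s (a • f) = a * wtWFunctional F K N ε s f := by
  have : K.indicator (fun x => ENNReal.ofReal ((a • f) x)) =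
      ENNReal.ofReal a • K.indicator fun x => ENNReal.ofReal (f x) := by
    ext x
    by_cases hx : x ∈ K <;> simp [hx, ENNReal.ofReal_mul ha.le]
  rw [wtWFunctional, wtWFunctional, this, wtW_smul (by simpa using ha) ENNReal.ofReal_ne_top,
    ENNReal.toReal_mul, ENNReal.toReal_ofReal ha.le]

lemma wtWFunctional_add_le [CompactSpace X] [ContinuousConstSMul G X] (hε : 0 < ε)
    (f g : C(X, ℝ)) : wtWFunctional F K N ε s (f + g) ≤
      wtWFunctional F K N ε s f + wtWFunctional F K N ε s g := by
  rw [wtWFunctional, wtWFunctional, wtWFunctional, ← ENNReal.toReal_add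
    (wtW_indicator_ofReal_ne_top hε f) (wtW_indicator_ofReal_ne_top hε g)]
  refine ENNReal.toReal_mono (ENNReal.add_ne_top.2 ⟨wtW_indicator_ofReal_ne_top hε f,
    wtW_indicator_ofReal_ne_top hε g⟩) (wtW_add_le fun x => ?_)
  by_cases hx : x ∈ K <;> simp [hx, ENNReal.ofReal_add_le]

lemma wtWFunctional_eq_zero {f : C(X, ℝ)} (hf : ∀ x ∈ K, f x ≤ 0) :
    wtWFunctional F K N ε s f = 0 := by
  have : K.indicator (fun x => ENNReal.ofReal (f x)) = 0 := by
    ext x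
    by_cases hx : x ∈ K <;> simp [hx, hf x]
  rw [wtWFunctional, this, wtW_zero, ENNReal.toReal_zero]

lemma wtWFunctional_one : wtWFunctional F K N ε s 1 = (wtWset F K N ε s).toReal := by
  simp [wtWFunctional, wtWset]

lemma wtWFunctional_le_exp {f : C(X, ℝ)} {n : ℕ} {x : X} (hn : N ≤ n) (hf : f ≤ 1)
    (hfB : ∀ y ∉ bowenBall (F n) x ε, f y = 0) :
    wtWFunctional F K N ε s f ≤ Real.exp (-s * (F n).card) := by
  refine ENNReal.toReal_le_of_le_ofReal (Real.exp_nonneg _) (wtW_le_exp (x := x) hn fun y => ?_)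
  by_cases hy : y ∈ bowenBall (F n) x ε
  · by_cases hyK : y ∈ K <;> simp [hy, hyK, show f y ≤ 1 from hf y]
  · simp [hy, hfB y hy]

/-- Frostman's lemma: a Hahn–Banach extension of `f ↦ W(f · χ_K)` normalised at `1` is a
positive functional, and its Riesz measure is dominated by `W(· χ_K)` on open sets. -/
theorem exists_measure_bowenBall_le [CompactSpace X] [ContinuousConstSMul G X]
    [MeasurableSpace X] [BorelSpace X] (hK : IsCompact K) (hε : 0 < ε)
    (hW : wtWset F K N ε s ≠ 0) :
    ∃ μ : Measure X, IsProbabilityMeasure μ ∧ μ K = 1 ∧ ∀ x n, N ≤ n →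
      μ (bowenBall (F n) x ε) ≤
        ENNReal.ofReal (Real.exp (-s * (F n).card) / (wtWset F K N ε s).toReal) := by
  set w := (wtWset F K N ε s).toReal
  have hw : 0 < w := ENNReal.toReal_pos hW (wtWset_ne_top hε)
  obtain ⟨L, hL, hL₁⟩ := exists_linearMap_le_sublinear_eq (wtWFunctional F K N ε s)
    (fun a ha f => wtWFunctional_smul ha f) (wtWFunctional_add_le hε) 1
  have hLpos : ∀ f, 0 ≤ f → 0 ≤ L f := fun f hf => by
    have := hL (-f)
    rw [map_neg, wtWFunctional_eq_zero fun x _ => by simpa using hf x] at this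
    linarith
  obtain ⟨μ, hμ, hμU⟩ := exists_isProbabilityMeasure_le_of_positive (w⁻¹ • L)
    (fun f hf => by simpa using mul_nonneg (inv_nonneg.2 hw.le) (hLpos f hf))
    (by simp [hL₁, wtWFunctional_one, w, hw.ne'])
  have hμ_le : ∀ U, IsOpen U → ∀ b, (∀ f : C(X, ℝ), 0 ≤ f → f ≤ 1 → (∀ x ∉ U, f x = 0) →
      wtWFunctional F K N ε s f ≤ b) → μ U ≤ ENNReal.ofReal (b / w) :=
    fun U hU b hb => hμU U hU _ fun f h₀ h₁ hf => by
      simpa [div_eq_inv_mul] using mul_le_mul_of_nonneg_left ((hL f).trans (hb f h₀ h₁ hf))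
        (inv_nonneg.2 hw.le)
  refine ⟨μ, hμ, ?_, fun x n hn => hμ_le _ (isOpen_bowenBall _ x ε) _
    fun f _ h₁ hf => wtWFunctional_le_exp hn h₁ hf⟩
  rw [← prob_compl_eq_zero_iff hK.measurableSet]
  simpa using hμ_le Kᶜ hK.isClosed.isOpen_compl 0
    fun f _ _ hf => (wtWFunctional_eq_zero fun x hx => (hf x (not_not_intro hx)).le).le

end Frostman

theorem exists_ofReal_le_lowLocEnt_of_ballMtot_ne_zero [Group G] [MetricSpace X] [CompactSpace X]
    [MulAction G X] [ContinuousConstSMul G X] [MeasurableSpace X] [BorelSpace X]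
    {F : ℕ → Finset G} (hF : GrowthCond F) {K : Set X} (hK : IsCompact K) {r s : ℝ}
    (hsr : s < r) (hM : ballMtot F K r ≠ 0) :
    ∃ μ : Measure X, IsProbabilityMeasure μ ∧ μ K = 1 ∧ ENNReal.ofReal s ≤ lowLocEnt μ F := by
  obtain ⟨ε, hε, N, hN⟩ : ∃ ε > 0, ∃ N, ballM F K N (2 * ε) r ≠ 0 := by
    contrapose! hM
    refine ballMtot_eq_zero_iff.2 fun ε hε N => ?_
    simpa [mul_div_cancel₀] using hM (ε / 2) (by positivity) N
  have hsum : ∑' n, ENNReal.ofReal (Real.exp (-(r - s) * (F n).card)) ≠ ⊤ := by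
    rw [← ENNReal.ofReal_tsum_of_nonneg (fun _ => Real.exp_nonneg _)
      (hF.summable_exp_neg_mul_card (sub_pos.2 hsr))]
    exact ENNReal.ofReal_ne_top
  have hW : wtWset F K N ε s ≠ 0 := fun h => hN <| by
    simpa [h] using ballM_le_mul_wtWset (Z := K) (N := N) (ε := ε) (s := s)
      (ENNReal.lt_add_right hsum one_ne_zero) (ENNReal.add_ne_top.2 ⟨hsum, one_ne_top⟩)
  obtain ⟨μ, hμ, hμK, hμB⟩ := exists_measure_bowenBall_le hK hε hW
  exact ⟨μ, hμ, hμK, ofReal_le_lowLocEnt μ hF.tendsto_card hε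
    (ENNReal.toReal_pos hW (wtWset_ne_top hε)) hμB⟩

theorem bowenEnt_eq_iSup_lowLocEnt_general
    [Group G] [MetricSpace X] [CompactSpace X]
    [MulAction G X] [ContinuousConstSMul G X] [MeasurableSpace X] [BorelSpace X]
    (F : ℕ → Finset G) (hGrow : GrowthCond F)
    (K : Set X) (hKc : IsCompact K) :
    bowenEnt F K =
      ⨆ (μ : Measure X) (_ : IsProbabilityMeasure μ) (_ : μ K = 1), lowLocEnt μ F := by
  refine le_antisymm (le_of_forall_lt fun c hc => ?_) (iSup₂_le fun μ _ => iSup_le fun hμK => ?_)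
  · obtain ⟨r, -, hcr, hr⟩ := ENNReal.lt_iff_exists_real_btwn.1 hc
    obtain ⟨s, -, hcs, hsr⟩ := ENNReal.lt_iff_exists_real_btwn.1 hcr
    have hM : ballMtot F K r ≠ 0 := fun h => (hr.trans_le (iInf₂_le r h)).false
    obtain ⟨μ, hμ, hμK, hsμ⟩ := exists_ofReal_le_lowLocEnt_of_ballMtot_ne_zero hGrow hKc
      ((ENNReal.ofReal_lt_ofReal_iff'.1 hsr).1) hM
    exact hcs.trans_le (hsμ.trans (le_iSup₂_of_le μ hμ (le_iSup_of_le hμK le_rfl)))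
  · exact le_iInf₂ fun t ht => lowLocEnt_le_of_ballM_eq_zero μ hKc.measurableSet hμK
      (ballMtot_eq_zero_iff.1 ht)

/-- variational principle for Bowen entropy. For a countable discrete group
`G` acting continuously on a compact metric space `X`, a non-empty compact `K ⊆ X` and a
sequence `{F_n}` of finite subsets of `G` with `lim_n |F_n|/log n = ∞` (no Følner condition),
`h^B_top(K,{F_n}) = sup { h̲_μ^{loc}({F_n}) : μ(K) = 1 }`. -/
theorem bowenEnt_eq_iSup_lowLocEnt
    [Group G] [Countable G] [MetricSpace X] [CompactSpace X]
    [MulAction G X] [ContinuousConstSMul G X] [MeasurableSpace X] [BorelSpace X]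
    (F : ℕ → Finset G) (hGrow : GrowthCond F)
    (K : Set X) (hK : K.Nonempty) (hKc : IsCompact K) :
    bowenEnt F K =
      ⨆ (μ : Measure X) (_ : IsProbabilityMeasure μ) (_ : μ K = 1), lowLocEnt μ F :=
  bowenEnt_eq_iSup_lowLocEnt_general F hGrow K hKc
end

section
/- Let (X,d) be a compact metric space, G a countable discrete group acting on X by homeomorphisms, F ⊆ G a finite subset, and ε > 0. Let {B_i}_{i∈I} be a finite family of Bowen balls B_i = B_F(x_i,ε) with positive integer weights c_i, let t > 0, and let Z_t = { x ∈ X : ∑_{i∈I} c_i χ_{B_i}(x) > t }. Then for any s ≥ 0 there exists a subset J ⊆ I such that the balls {B_i}_{i∈J} are pairwise disjoint, Z_t ⊆ ⋃_{i∈J} B_F(x_i, 5ε), and |J|·exp(−s|F|) ≤ (1/t) ∑_{i∈I} c_i exp(−s|F|). -/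
open Filter Set MeasureTheory Topology ENNReal Pointwise

variable {G X : Type*}

private lemma five_r_aux {ι : Type*} [Group G] [MetricSpace X] [MulAction G X]
    (F : Finset G) (ε : ℝ) (hε : 0 < ε) (x : ι → X) (c : ι → ℕ)
    (t : ℝ) (ht : 0 < t) :
    ∀ I : Finset ι, (∀ i ∈ I, 0 < c i) →
    ∃ J ⊆ I,
      (∀ i ∈ J, ∀ j ∈ J, i ≠ j →
        Disjoint (bowenBall F (x i) ε) (bowenBall F (x j) ε)) ∧
      ({z : X | t < ∑ i ∈ I, (c i : ℝ) * (bowenBall F (x i) ε).indicator (fun _ => (1 : ℝ)) z}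
        ⊆ ⋃ i ∈ J, bowenBall F (x i) (5 * ε)) ∧
      (J.card : ℝ) * t ≤ ∑ i ∈ I, (c i : ℝ) := by
  classical
  intro I
  induction I using Finset.strongInduction with
  | _ I ih =>
    intro hc
    by_cases hZ : {z : X | t < ∑ i ∈ I,
        (c i : ℝ) * (bowenBall F (x i) ε).indicator (fun _ => (1 : ℝ)) z} = ∅
    · refine ⟨∅, Finset.empty_subset I, by simp, by rw [hZ]; exact Set.empty_subset _, ?_⟩
      simp only [Finset.card_empty, Nat.cast_zero, zero_mul]
      exact Finset.sum_nonneg fun i _ => by positivity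
    · obtain ⟨z₀, hz₀⟩ := Set.nonempty_iff_ne_empty.2 hZ
      simp only [Set.mem_setOf_eq] at hz₀
      -- find a ball containing z₀
      have hex : ∃ j ∈ I, z₀ ∈ bowenBall F (x j) ε := by
        by_contra h
        push_neg at h
        have : ∑ i ∈ I, (c i : ℝ) * (bowenBall F (x i) ε).indicator (fun _ => (1 : ℝ)) z₀
            = 0 := by
          refine Finset.sum_eq_zero fun i hi => ?_
          rw [Set.indicator_of_notMem (h i hi), mul_zero]
        linarith
      obtain ⟨j₀, hj₀I, hz₀j₀⟩ := hex
      set K : Finset ι := I.filter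
        (fun i => ((bowenBall F (x i) ε) ∩ (bowenBall F (x j₀) ε)).Nonempty) with hK
      have hj₀K : j₀ ∈ K := Finset.mem_filter.2 ⟨hj₀I, ⟨z₀, hz₀j₀, hz₀j₀⟩⟩
      have hKI : K ⊆ I := Finset.filter_subset _ _
      set I' : Finset ι := I \ K with hI'
      have hj₀I' : j₀ ∉ I' := by simp [hI', hj₀K]
      have hI'ss : I' ⊂ I :=
        (Finset.ssubset_iff_of_subset Finset.sdiff_subset).2 ⟨j₀, hj₀I, hj₀I'⟩
      obtain ⟨J', hJ'I', hdisj', hcov', hcount'⟩ :=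
        ih I' hI'ss (fun i hi => hc i (Finset.sdiff_subset hi))
      have hJ'K : ∀ j ∈ J', Disjoint (bowenBall F (x j) ε) (bowenBall F (x j₀) ε) := by
        intro j hj
        have hjI' : j ∈ I' := hJ'I' hj
        have : ¬ ((bowenBall F (x j) ε) ∩ (bowenBall F (x j₀) ε)).Nonempty := by
          intro h
          exact (Finset.mem_sdiff.1 hjI').2 (Finset.mem_filter.2 ⟨(Finset.mem_sdiff.1 hjI').1, h⟩)
        rw [Set.not_nonempty_iff_eq_empty] at this
        exact Set.disjoint_iff_inter_eq_empty.2 this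
      have hj₀J' : j₀ ∉ J' := fun h => hj₀I' (hJ'I' h)
      refine ⟨insert j₀ J', Finset.insert_subset hj₀I (hJ'I'.trans Finset.sdiff_subset),
        ?_, ?_, ?_⟩
      · -- pairwise disjoint
        intro i hi j hj hij
        rcases Finset.mem_insert.1 hi with hi' | hi'
        · rcases Finset.mem_insert.1 hj with hj' | hj'
          · exact absurd (hi'.trans hj'.symm) hij
          · subst hi'; exact (hJ'K j hj').symm
        · rcases Finset.mem_insert.1 hj with hj' | hj'
          · subst hj'; exact hJ'K i hi'
          · exact hdisj' i hi' j hj' hij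
      · -- covering
        intro z hz
        simp only [Set.mem_setOf_eq] at hz
        by_cases hzK : ∃ i ∈ K, z ∈ bowenBall F (x i) ε
        · obtain ⟨i, hiK, hzi⟩ := hzK
          obtain ⟨w, hwi, hwj₀⟩ := (Finset.mem_filter.1 hiK).2
          have hmem : z ∈ bowenBall F (x j₀) (5 * ε) := by
            intro g hg
            have h1 := hwj₀ g hg
            have h2 := hwi g hg
            have h3 := hzi g hg
            have := dist_triangle4 (g • x j₀) (g • w) (g • x i) (g • z)
            rw [dist_comm (g • w) (g • x i)] at this
            linarith
          exact Set.mem_biUnion (Finset.mem_insert_self j₀ J') hmem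
        · push_neg at hzK
          have hsum : ∑ i ∈ I, (c i : ℝ) * (bowenBall F (x i) ε).indicator
              (fun _ => (1 : ℝ)) z
              = ∑ i ∈ I', (c i : ℝ) * (bowenBall F (x i) ε).indicator (fun _ => (1 : ℝ)) z := by
            rw [← Finset.sum_sdiff hKI, ← hI']
            have : ∑ i ∈ K, (c i : ℝ) * (bowenBall F (x i) ε).indicator
                (fun _ => (1 : ℝ)) z = 0 :=
              Finset.sum_eq_zero fun i hi => by
                rw [Set.indicator_of_notMem (hzK i hi), mul_zero]
            rw [this, add_zero]
          have hzI' : z ∈ {z : X | t < ∑ i ∈ I',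
              (c i : ℝ) * (bowenBall F (x i) ε).indicator (fun _ => (1 : ℝ)) z} := by
            rw [Set.mem_setOf_eq, ← hsum]; exact hz
          obtain ⟨j, hj⟩ := Set.mem_iUnion.1 (hcov' hzI')
          obtain ⟨hjJ', hjz⟩ := Set.mem_iUnion.1 hj
          exact Set.mem_biUnion (Finset.mem_insert_of_mem hjJ') hjz
      · -- counting
        have htK : t ≤ ∑ i ∈ K, (c i : ℝ) := by
          have h1 : ∑ i ∈ I, (c i : ℝ) * (bowenBall F (x i) ε).indicator
              (fun _ => (1 : ℝ)) z₀
              = ∑ i ∈ I.filter (fun i => z₀ ∈ bowenBall F (x i) ε), (c i : ℝ) := by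
            rw [Finset.sum_filter]
            refine Finset.sum_congr rfl fun i _ => ?_
            by_cases h : z₀ ∈ bowenBall F (x i) ε <;>
              simp [Set.indicator_apply, h]
          have h2 : I.filter (fun i => z₀ ∈ bowenBall F (x i) ε) ⊆ K := by
            intro i hi
            obtain ⟨hiI, hzi⟩ := Finset.mem_filter.1 hi
            exact Finset.mem_filter.2 ⟨hiI, ⟨z₀, hzi, hz₀j₀⟩⟩
          have h3 : ∑ i ∈ I.filter (fun i => z₀ ∈ bowenBall F (x i) ε), (c i : ℝ)
              ≤ ∑ i ∈ K, (c i : ℝ) :=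
            Finset.sum_le_sum_of_subset_of_nonneg h2 fun i _ _ => by positivity
          linarith [hz₀, h1 ▸ hz₀]
        have hcard : ((insert j₀ J').card : ℝ) = (J'.card : ℝ) + 1 := by
          rw [Finset.card_insert_of_notMem hj₀J']; push_cast; ring
        have hsplit : ∑ i ∈ I, (c i : ℝ) = ∑ i ∈ I', (c i : ℝ) + ∑ i ∈ K, (c i : ℝ) := by
          rw [← Finset.sum_sdiff hKI, ← hI']
        rw [hcard, hsplit]
        nlinarith [hcount']

/-- 5r-covering step. Given a finite family of Bowen balls
`B_i = B_F(x_i,ε)` with positive integer weights `c_i`, `t > 0` and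
`Z_t = {z : ∑_i c_i χ_{B_i}(z) > t}`, for any `s ≥ 0` there is `J ⊆ I` such that the balls
`{B_i}_{i∈J}` are pairwise disjoint, `Z_t ⊆ ⋃_{i∈J} B_F(x_i,5ε)`, and
`|J| exp(-s|F|) ≤ (1/t) ∑_{i∈I} c_i exp(-s|F|)`. -/
theorem five_r_covering_step {ι : Type*}
    [Group G] [MetricSpace X] [CompactSpace X] [MulAction G X] [ContinuousConstSMul G X]
    [Countable G]
    (F : Finset G) (ε : ℝ) (hε : 0 < ε) (I : Finset ι) (x : ι → X) (c : ι → ℕ)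
    (hc : ∀ i ∈ I, 0 < c i) (t : ℝ) (ht : 0 < t) (s : ℝ) (hs : 0 ≤ s) :
    ∃ J ⊆ I,
      (∀ i ∈ J, ∀ j ∈ J, i ≠ j →
        Disjoint (bowenBall F (x i) ε) (bowenBall F (x j) ε)) ∧
      ({z : X | t < ∑ i ∈ I, (c i : ℝ) * (bowenBall F (x i) ε).indicator (fun _ => (1 : ℝ)) z}
        ⊆ ⋃ i ∈ J, bowenBall F (x i) (5 * ε)) ∧
      (J.card : ℝ) * Real.exp (-s * (F.card : ℝ)) ≤
        (1 / t) * ∑ i ∈ I, (c i : ℝ) * Real.exp (-s * (F.card : ℝ)) := by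
  obtain ⟨J, hJI, hdisj, hcov, hcount⟩ := five_r_aux F ε hε x c t ht I hc
  refine ⟨J, hJI, hdisj, hcov, ?_⟩
  have he : (0 : ℝ) < Real.exp (-s * (F.card : ℝ)) := Real.exp_pos _
  have h1 : (J.card : ℝ) ≤ (1 / t) * ∑ i ∈ I, (c i : ℝ) := by
    rw [one_div, inv_mul_eq_div, le_div_iff₀ ht]
    exact hcount
  calc (J.card : ℝ) * Real.exp (-s * (F.card : ℝ))
      ≤ ((1 / t) * ∑ i ∈ I, (c i : ℝ)) * Real.exp (-s * (F.card : ℝ)) :=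
        mul_le_mul_of_nonneg_right h1 he.le
    _ = (1 / t) * ∑ i ∈ I, (c i : ℝ) * Real.exp (-s * (F.card : ℝ)) := by
        rw [mul_assoc, Finset.sum_mul]
end
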